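/- arXiv:1904.00162 — 2 statements merged into one kernel-verified Lean document; each statement's English description precedes it below -/
import Mathlib

section
/- Let μ be a positive regular Borel measure on ℝⁿ × ℝⁿ that is finite on compact sets and satisfies μ(Y × (Z + h)) = μ(Y × Z) for all Borel sets Y, Z ⊂ ℝⁿ and all h ∈ ℝⁿ. Then there exists a positive regular Borel measure ϱ on ℝⁿ such that μ = ϱ ⊗ ν_n, i.e. μ(Y × Z) = ϱ(Y)·ν_n(Z) for all Borel Y, Z ⊂ ℝⁿ, where ν_n is Lebesgue measure on ℝⁿ. -/
noncomputable section
open MeasureTheory Complex Finset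

open scoped Real

variable {n : ℕ}

/-- `|z|² = ∑ |z_j|²` for `z ∈ ℂⁿ`. -/
def absSq {n : ℕ} (z : Fin n → ℂ) : ℝ := ∑ j, ‖z j‖ ^ 2

/-- Membership in the Fock space `F²(ℂⁿ)`: entire and square integrable against the Gaussian. -/
def MemFock {n : ℕ} (f : (Fin n → ℂ) → ℂ) : Prop :=
  Differentiable ℂ f ∧
    Integrable (fun z => ‖f z‖ ^ 2 * Real.exp (-absSq z))

/-- Squared Fock norm. -/
def fockNormSq {n : ℕ} (f : (Fin n → ℂ) → ℂ) : ℝ :=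
  (Real.pi ^ n)⁻¹ * ∫ z, ‖f z‖ ^ 2 * Real.exp (-absSq z)

def fockNorm {n : ℕ} (f : (Fin n → ℂ) → ℂ) : ℝ := Real.sqrt (fockNormSq f)

/-- Fock inner product. -/
def fockInner {n : ℕ} (f g : (Fin n → ℂ) → ℂ) : ℂ :=
  ((Real.pi : ℂ) ^ n)⁻¹ * ∫ z, f z * (starRingEnd ℂ) (g z) * (Real.exp (-absSq z) : ℂ)

/-- FC measure with constant ω. -/
def IsFC {n : ℕ} (μ : Measure (Fin n → ℂ)) (ω : ℝ) : Prop :=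
  ∀ f : (Fin n → ℂ) → ℂ, MemFock f →
    ∫⁻ z, ENNReal.ofReal (‖f z‖ ^ 2 * Real.exp (-absSq z)) ∂μ
      ≤ ENNReal.ofReal (ω * fockNormSq f)

/-- `z · conj w`. -/
def dotC {n : ℕ} (z w : Fin n → ℂ) : ℂ := ∑ j, z j * (starRingEnd ℂ) (w j)

/-- Toeplitz operator with measure symbol. -/
def toeplitz {n : ℕ} (μ : Measure (Fin n → ℂ)) (f : (Fin n → ℂ) → ℂ) : (Fin n → ℂ) → ℂ :=
  fun z => ((Real.pi : ℂ) ^ n)⁻¹ *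
    ∫ w, Complex.exp (dotC z w) * f w * (Real.exp (-absSq w) : ℂ) ∂μ

/-- Identification of ℝⁿ × ℝⁿ with ℂⁿ via z = x + iy. -/
def eqv {n : ℕ} (p : (Fin n → ℝ) × (Fin n → ℝ)) : Fin n → ℂ := fun j => ⟨p.1 j, p.2 j⟩

/-- A measure on ℂⁿ is horizontal if it is ϱ ⊗ ν_n. -/
def IsHorizontal {n : ℕ} (μ : Measure (Fin n → ℂ)) : Prop :=
  ∃ ϱ : Measure (Fin n → ℝ), ϱ.Regular ∧ μ = Measure.map eqv (ϱ.prod volume)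

/-- Weyl operator. -/
def weyl {n : ℕ} (h : Fin n → ℂ) (f : (Fin n → ℂ) → ℂ) : (Fin n → ℂ) → ℂ :=
  fun z => Complex.exp (dotC z h - (absSq h : ℂ) / 2) * f (z - h)

/-- purely imaginary vector ih. -/
def iC {n : ℕ} (h : Fin n → ℝ) : Fin n → ℂ := fun j => Complex.I * (h j : ℂ)

/-- Partial complex derivative in direction j. -/
def pderiv' {n : ℕ} (j : Fin n) (f : (Fin n → ℂ) → ℂ) : (Fin n → ℂ) → ℂ :=
  fun z => fderiv ℂ f z (Pi.single j 1)

/-- Iterated partial derivative ∂^k. -/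
def multiPD {n : ℕ} (k : Fin n → ℕ) (f : (Fin n → ℂ) → ℂ) : (Fin n → ℂ) → ℂ :=
  (List.finRange n).foldr (fun j g => (pderiv' j)^[k j] g) f

/-- Weighted measure μ_p with real exponents p. -/
def wMeasure {n : ℕ} (μ : Measure (Fin n → ℂ)) (p : Fin n → ℝ) : Measure (Fin n → ℂ) :=
  μ.withDensity fun z =>
    ENNReal.ofReal (∏ j, (1 + (z j).re ^ 2) ^ (p j) * (1 + (z j).im ^ 2) ^ (p j))

/-- Polydisk centered at z with polyradius r. -/
def polydisk {n : ℕ} (z : Fin n → ℂ) (r : Fin n → ℝ) : Set (Fin n → ℂ) :=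
  {w | ∀ j, ‖w j - z j‖ < r j}

/-- k-FC measure with constant ω. -/
def IsKFC {n : ℕ} (k : Fin n → ℕ) (μ : Measure (Fin n → ℂ)) (ω : ℝ) : Prop :=
  ∀ f : (Fin n → ℂ) → ℂ, MemFock f →
    ∫⁻ z, ENNReal.ofReal (‖multiPD k f z‖ ^ 2 * Real.exp (-absSq z)) ∂μ
      ≤ ENNReal.ofReal ω *
        ∫⁻ z, ENNReal.ofReal (‖f z‖ ^ 2 * Real.exp (-absSq z))

/-- k-FC in the extended sense (k given via m = 2k): sup over z of μ_k of unit polydisks. -/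
def IsKFCext {n : ℕ} (m : Fin n → ℕ) (μ : Measure (Fin n → ℂ)) : Prop :=
  (⨆ z : Fin n → ℂ, wMeasure μ (fun j => (m j : ℝ) / 2) (polydisk z fun _ => 1)) < ⊤

def dotR {n : ℕ} (x : Fin n → ℝ) (z : Fin n → ℂ) : ℂ := ∑ j, (x j : ℂ) * z j
def sqC {n : ℕ} (z : Fin n → ℂ) : ℂ := ∑ j, z j ^ 2
def sqR {n : ℕ} (x : Fin n → ℝ) : ℝ := ∑ j, x j ^ 2
def conjV {n : ℕ} (z : Fin n → ℂ) : Fin n → ℂ := fun j => (starRingEnd ℂ) (z j)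

/-- Bargmann transform B* : L²(ℝⁿ) → F²(ℂⁿ). -/
def bargmannStar {n : ℕ} (f : (Fin n → ℝ) → ℂ) : (Fin n → ℂ) → ℂ := fun z =>
  (Complex.ofReal ((Real.pi ^ ((n : ℝ) / 4))⁻¹)) *
    ∫ x, f x * Complex.exp ((Real.sqrt 2 : ℂ) * dotR x z - (sqR x : ℂ) / 2 - sqC z / 2)

/-- Inverse Bargmann transform B : F²(ℂⁿ) → L²(ℝⁿ). -/
def bargmann {n : ℕ} (g : (Fin n → ℂ) → ℂ) : (Fin n → ℝ) → ℂ := fun x =>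
  (Complex.ofReal ((Real.pi ^ ((n : ℝ) / 4))⁻¹)) * ((Real.pi : ℂ) ^ n)⁻¹ *
    ∫ z, g z * Complex.exp ((Real.sqrt 2 : ℂ) * dotR x (conjV z) - (sqR x : ℂ) / 2
      - sqC (conjV z) / 2) * (Real.exp (-absSq z) : ℂ)

/-- γ_ϱ spectral function. -/
def gammaRho {n : ℕ} (ϱ : Measure (Fin n → ℝ)) (x : Fin n → ℝ) : ℝ :=
  (Real.sqrt (2 / Real.pi)) ^ n *
    ∫ y, Real.exp (-(∑ j, (x j - Real.sqrt 2 * y j) ^ 2)) ∂ϱ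

/-- Physicists' Hermite polynomial. -/
def hermiteH (m : ℕ) (t : ℝ) : ℝ :=
  (-1 : ℝ) ^ m * Real.exp (t ^ 2) * (deriv^[m] fun s : ℝ => Real.exp (-s ^ 2)) t

/-- The measure ν_{n,β} on ℝⁿ. -/
def nuMeasure {n : ℕ} (β : Fin n → ℝ) : Measure (Fin n → ℝ) :=
  volume.withDensity fun y => ENNReal.ofReal (∏ j, (1 + y j ^ 2) ^ (-(β j)))


/-- Berezin transform of a positive measure (as a lower integral). -/
def berezinL {n : ℕ} (μ : Measure (Fin n → ℂ)) (z : Fin n → ℂ) : ENNReal :=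
  ENNReal.ofReal ((Real.pi ^ n)⁻¹) *
    ∫⁻ w, ENNReal.ofReal (Real.exp (-absSq (z - w))) ∂μ

/-!
For bounded `Y`, the map `Z ↦ μ (Y ×ˢ Z)` is a translation-invariant measure on `ℝⁿ` that is
finite on compact sets, so by uniqueness of Haar measure it is `c_Y • volume`; testing on the unit
cube `[0, 1]ⁿ` gives `c_Y = μ (Y ×ˢ [0, 1]ⁿ) =: ϱ Y`. An arbitrary `Y` is the increasing union of
the bounded sets `Y ∩ closedBall 0 m`. Being finite on compact sets, `ϱ` is automatically regular
on `ℝⁿ`.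
-/

namespace MeasureTheory.Measure

open Set

variable {α β : Type*} [MeasurableSpace α] [MeasurableSpace β]

lemma map_snd_restrict_prod_univ_apply (μ : Measure (α × β)) (Y : Set α) {S : Set β}
    (hS : MeasurableSet S) : (μ.restrict (Y ×ˢ univ)).map Prod.snd S = μ (Y ×ˢ S) := by
  rw [map_apply measurable_snd hS, restrict_apply (measurable_snd hS)]
  congr 1
  ext p
  simp [and_comm]

lemma map_fst_restrict_univ_prod_apply (μ : Measure (α × β)) (Z : Set β) {S : Set α}
    (hS : MeasurableSet S) : (μ.restrict (univ ×ˢ Z)).map Prod.fst S = μ (S ×ˢ Z) := by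
  rw [map_apply measurable_fst hS, restrict_apply (measurable_fst hS)]
  congr 1
  ext p
  simp

section Topology

variable [TopologicalSpace α] [TopologicalSpace β] {μ : Measure (α × β)}
  [IsFiniteMeasureOnCompacts μ]

lemma isFiniteMeasureOnCompacts_map_snd_restrict_prod_univ [T2Space β] [OpensMeasurableSpace β]
    {Y : Set α} (hY : IsCompact (closure Y)) :
    IsFiniteMeasureOnCompacts ((μ.restrict (Y ×ˢ univ)).map Prod.snd) where
  lt_top_of_isCompact K hK := by
    rw [map_snd_restrict_prod_univ_apply μ Y hK.measurableSet]
    exact (measure_mono (Set.prod_mono subset_closure le_rfl)).trans_lt (hY.prod hK).measure_lt_top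

lemma isFiniteMeasureOnCompacts_map_fst_restrict_univ_prod [T2Space α] [OpensMeasurableSpace α]
    {Z : Set β} (hZ : IsCompact Z) :
    IsFiniteMeasureOnCompacts ((μ.restrict (univ ×ˢ Z)).map Prod.fst) where
  lt_top_of_isCompact K hK := by
    rw [map_fst_restrict_univ_prod_apply μ Z hK.measurableSet]
    exact (hK.prod hZ).measure_lt_top

end Topology

variable {G : Type*} [AddCommGroup G] [MeasurableSpace G]

lemma isAddLeftInvariant_map_snd_restrict_prod_univ [MeasurableAdd G] (μ : Measure (α × G))
    (Y : Set α) (hinv : ∀ S, MeasurableSet S → ∀ h : G, μ (Y ×ˢ ((· + h) '' S)) = μ (Y ×ˢ S)) :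
    ((μ.restrict (Y ×ˢ univ)).map Prod.snd).IsAddLeftInvariant where
  map_add_left_eq_self g := by
    ext S hS
    have hS' : MeasurableSet ((g + ·) ⁻¹' S) := measurable_const_add g hS
    rw [map_apply (measurable_const_add g) hS, map_snd_restrict_prod_univ_apply μ Y hS',
      map_snd_restrict_prod_univ_apply μ Y hS, ← hinv S hS (-g), Set.image_add_right, neg_neg]
    simp only [add_comm]

theorem exists_measure_prod_eq_mul_addHaar [TopologicalSpace α] [TopologicalSpace G]
    [IsTopologicalAddGroup G] [LocallyCompactSpace G] [SecondCountableTopology G] [T2Space G]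
    [BorelSpace G] (μ : Measure (α × G)) [IsFiniteMeasureOnCompacts μ] (ν : Measure G)
    [IsAddHaarMeasure ν]
    {Y : Set α} (hY : IsCompact (closure Y))
    (hinv : ∀ S, MeasurableSet S → ∀ h : G, μ (Y ×ˢ ((· + h) '' S)) = μ (Y ×ˢ S)) :
    ∃ c, ∀ Z, MeasurableSet Z → μ (Y ×ˢ Z) = c * ν Z := by
  set ν' := (μ.restrict (Y ×ˢ univ)).map Prod.snd
  have hν'fin := isFiniteMeasureOnCompacts_map_snd_restrict_prod_univ (μ := μ) hY
  have hν'inv := isAddLeftInvariant_map_snd_restrict_prod_univ μ Y hinv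
  refine ⟨addHaarScalarFactor ν' ν, fun Z hZ => ?_⟩
  calc μ (Y ×ˢ Z) = ν' Z := (map_snd_restrict_prod_univ_apply μ Y hZ).symm
    _ = (addHaarScalarFactor ν' ν • ν) Z := congrArg (· Z) (isAddLeftInvariant_eq_smul ν' ν)
    _ = addHaarScalarFactor ν' ν * ν Z := rfl

lemma measure_prod_eq_iSup_inter_closedBall [PseudoMetricSpace α] (μ : Measure (α × β))
    (Y : Set α) (Z : Set β) (x₀ : α) :
    μ (Y ×ˢ Z) = ⨆ m : ℕ, μ ((Y ∩ Metric.closedBall x₀ m) ×ˢ Z) := by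
  have hmono : Monotone fun m : ℕ => (Y ∩ Metric.closedBall x₀ m) ×ˢ Z := fun a b hab =>
    Set.prod_mono (inter_subset_inter_right _ (Metric.closedBall_subset_closedBall
      (Nat.cast_le.mpr hab))) le_rfl
  rw [← hmono.measure_iUnion, ← iUnion_prod_const, ← inter_iUnion, Metric.iUnion_closedBall_nat,
    inter_univ]

end MeasureTheory.Measure

theorem stmt7_general (μ : Measure ((Fin n → ℝ) × (Fin n → ℝ)))
    (hfin : IsFiniteMeasureOnCompacts μ)
    (hinv : ∀ (Y Z : Set (Fin n → ℝ)), MeasurableSet Y → MeasurableSet Z →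
      ∀ h : Fin n → ℝ, μ (Y ×ˢ ((fun z => z + h) '' Z)) = μ (Y ×ˢ Z)) :
    ∃ ϱ : Measure (Fin n → ℝ), ϱ.Regular ∧
      ∀ (Y Z : Set (Fin n → ℝ)), MeasurableSet Y → MeasurableSet Z →
        μ (Y ×ˢ Z) = ϱ Y * volume Z := by
  set I := Set.Icc (0 : Fin n → ℝ) 1
  have hI : volume I = 1 := by simp [I, Real.volume_Icc_pi]
  have hslab : ∀ Y, MeasurableSet Y → Bornology.IsBounded Y →
      ∀ Z, MeasurableSet Z → μ (Y ×ˢ Z) = μ (Y ×ˢ I) * volume Z := by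
    intro Y hY hYb Z hZ
    obtain ⟨c, hc⟩ :=
      Measure.exists_measure_prod_eq_mul_addHaar μ volume hYb.isCompact_closure (hinv Y · hY)
    rw [hc Z hZ, hc I measurableSet_Icc, hI, mul_one]
  have hϱfin := Measure.isFiniteMeasureOnCompacts_map_fst_restrict_univ_prod (μ := μ)
    (isCompact_Icc : IsCompact I)
  refine ⟨(μ.restrict (Set.univ ×ˢ I)).map Prod.fst, inferInstance, fun Y Z hY hZ => ?_⟩
  rw [Measure.map_fst_restrict_univ_prod_apply μ I hY,
    Measure.measure_prod_eq_iSup_inter_closedBall μ Y Z 0,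
    Measure.measure_prod_eq_iSup_inter_closedBall μ Y I 0, ENNReal.iSup_mul]
  exact iSup_congr fun m => hslab _ (hY.inter Metric.isClosed_closedBall.measurableSet)
    (Metric.isBounded_closedBall.subset Set.inter_subset_right) Z hZ

/-- a positive regular Borel measure on ℝⁿ×ℝⁿ, finite on compact sets, invariant
under translations in the second factor, is a product ϱ ⊗ ν_n. -/
theorem stmt7 (μ : Measure ((Fin n → ℝ) × (Fin n → ℝ))) (hreg : μ.Regular)
    (hfin : IsFiniteMeasureOnCompacts μ)
    (hinv : ∀ (Y Z : Set (Fin n → ℝ)), MeasurableSet Y → MeasurableSet Z →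
      ∀ h : Fin n → ℝ, μ (Y ×ˢ ((fun z => z + h) '' Z)) = μ (Y ×ˢ Z)) :
    ∃ ϱ : Measure (Fin n → ℝ), ϱ.Regular ∧
      ∀ (Y Z : Set (Fin n → ℝ)), MeasurableSet Y → MeasurableSet Z →
        μ (Y ×ˢ Z) = ϱ Y * volume Z :=
  stmt7_general μ hfin hinv
end
end

section
/- Let 𝓛 be a Lagrangian plane of the standard symplectic space (ℝ^{2n}, ω₀), identified with a real n-dimensional subspace of ℂⁿ, and let X be a unitary n×n complex matrix with X·𝓛 = iℝⁿ (as real subspaces of ℂⁿ). Let μ be a positive regular Borel measure on ℂⁿ that is finite on compact sets, and define μ_{X*}(E) = μ(X*·E) for Borel E ⊂ ℂⁿ, where X* is the conjugate transpose of X. Then μ is 𝓛-invariant, i.e. μ(E + h) = μ(E) for every Borel set E ⊂ ℂⁿ and every h ∈ 𝓛, if and only if μ_{X*} is horizontal, i.e. there exists a positive regular Borel measure ϱ on ℝⁿ with μ_{X*} = ϱ ⊗ ν_n. -/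
noncomputable section
open MeasureTheory Complex Finset

open scoped Real

variable {n : ℕ}

/-- The standard symplectic form ω₀ on ℝⁿ × ℝⁿ. -/
def sympForm {n : ℕ} (p q : (Fin n → ℝ) × (Fin n → ℝ)) : ℝ :=
  (∑ j, p.1 j * q.2 j) - ∑ j, p.2 j * q.1 j


/-!
Conjugation by the unitary `X` turns translations by `𝓛` into translations by `iℝⁿ`, so `μ` is
`𝓛`-invariant iff `μ_{X*}` is invariant under imaginary translations. Transported to
`ℝⁿ × ℝⁿ`, such a measure `τ` has translation-invariant slices `B ↦ τ (A × B)`; when `A` is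
relatively compact the slice is finite on compacts, hence `c_A • ν_n` by uniqueness of Haar
measure, and a compact exhaustion extends `τ (A × B) ν_n(U) = τ (A × U) ν_n(B)` to all `A`.
Fixing `U` with `0 < ν_n(U) < ∞`, the measure `ϱ(A) = τ (A × U) / ν_n(U)` satisfies `τ = ϱ ⊗ ν_n`.
-/

open scoped ENNReal

section ConjugateTranslation

variable {R E F : Type*} [Semiring R] [AddCommGroup E] [Module R E] [TopologicalSpace E]
  [ContinuousAdd E] [MeasurableSpace E] [BorelSpace E] [AddCommGroup F] [Module R F]
  [TopologicalSpace F] [ContinuousAdd F] [MeasurableSpace F] [BorelSpace F]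

lemma ContinuousLinearEquiv.map_map_add_right_eq_iff (e : E ≃L[R] F) (μ : Measure E) (v : E) :
    (μ.map e).map (· + e v) = μ.map e ↔ μ.map (· + v) = μ := by
  have hconj : (μ.map e).map (· + e v) = (μ.map (· + v)).map e := by
    rw [Measure.map_map (continuous_add_const _).measurable e.continuous.measurable,
      Measure.map_map e.continuous.measurable (continuous_add_const _).measurable]
    congr 1
    funext x
    simp
  rw [hconj]
  exact e.toHomeomorph.toMeasurableEquiv.measurableEmbedding.map_injective.eq_iff

end ConjugateTranslation

lemma measure_image_add_right {E : Type*} [AddGroup E] [MeasurableSpace E]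
    [MeasurableAdd E] (μ : Measure E) (v : E) {s : Set E} (hs : MeasurableSet s) :
    μ ((· + v) '' s) = μ.map (· + -v) s := by
  rw [Set.image_add_right, Measure.map_apply (measurable_add_const _) hs]

section ProdHaar

variable {α G : Type*} [MeasurableSpace α]
  [AddGroup G] [TopologicalSpace G] [IsTopologicalAddGroup G] [MeasurableSpace G] [BorelSpace G]
  [LocallyCompactSpace G] [SecondCountableTopology G]
  {τ : Measure (α × G)} {ν : Measure G} [ν.IsAddHaarMeasure]

lemma exists_measure_prod_eq_mul_of_map_prodMap_add_left {A : Set α}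
    (hA : MeasurableSet A) (hAK : ∀ K, IsCompact K → τ (A ×ˢ K) < ∞)
    (hτ : ∀ g : G, τ.map (Prod.map id (g + ·)) = τ) :
    ∃ c : ℝ≥0∞, ∀ B, MeasurableSet B → τ (A ×ˢ B) = c * ν B := by
  set σ : Measure G := (τ.restrict (A ×ˢ Set.univ)).map Prod.snd
  have hσ : ∀ B, MeasurableSet B → σ B = τ (A ×ˢ B) := by
    intro B hB
    rw [Measure.map_apply measurable_snd hB, Measure.restrict_apply (measurable_snd hB)]
    congr 1
    ext p
    simp [and_comm]
  have : IsFiniteMeasureOnCompacts σ := ⟨fun K hK =>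
    (measure_mono subset_closure).trans_lt
      (hσ _ isClosed_closure.measurableSet ▸ hAK _ hK.closure)⟩
  have : σ.IsAddLeftInvariant := by
    refine ⟨fun g => Measure.ext fun B hB => ?_⟩
    have hpre : A ×ˢ ((g + ·) ⁻¹' B) = Prod.map id (g + ·) ⁻¹' (A ×ˢ B) := rfl
    rw [Measure.map_apply (measurable_const_add g) hB,
      hσ _ (hB.preimage (measurable_const_add g)), hσ B hB, hpre,
      ← Measure.map_apply (measurable_id.prodMap (measurable_const_add g)) (hA.prod hB), hτ]
  exact ⟨_, fun B hB => by rw [← hσ B hB, Measure.isAddLeftInvariant_eq_smul σ ν]; rfl⟩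

lemma measure_prod_eq_iSup_compactCovering [TopologicalSpace α] [SigmaCompactSpace α]
    {β : Type*} [MeasurableSpace β] (μ : Measure (α × β)) (A : Set α) (B : Set β) :
    μ (A ×ˢ B) = ⨆ k, μ ((A ∩ compactCovering α k) ×ˢ B) := by
  have hmono : Monotone fun k => (A ∩ compactCovering α k) ×ˢ B := fun i j hij =>
    Set.prod_mono (Set.inter_subset_inter_right _ (compactCovering_subset α hij)) le_rfl
  rw [← hmono.measure_iUnion, ← Set.iUnion_prod_const, ← Set.inter_iUnion,
    iUnion_compactCovering, Set.inter_univ]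

variable [TopologicalSpace α] [T2Space α] [OpensMeasurableSpace α] [SigmaCompactSpace α]
  [IsFiniteMeasureOnCompacts τ]

lemma measure_prod_mul_eq_of_map_prodMap_add_left
    (hτ : ∀ g : G, τ.map (Prod.map id (g + ·)) = τ) {A : Set α} {B C : Set G} (hA : MeasurableSet A)
    (hB : MeasurableSet B) (hC : MeasurableSet C) :
    τ (A ×ˢ B) * ν C = τ (A ×ˢ C) * ν B := by
  have hslice : ∀ k, τ ((A ∩ compactCovering α k) ×ˢ B) * ν C
      = τ ((A ∩ compactCovering α k) ×ˢ C) * ν B := by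
    intro k
    have hK := isCompact_compactCovering α k
    obtain ⟨c, hc⟩ := exists_measure_prod_eq_mul_of_map_prodMap_add_left (ν := ν)
      (hA.inter hK.measurableSet) (fun K hK' => (measure_mono (Set.prod_mono
        Set.inter_subset_right le_rfl)).trans_lt (hK.prod hK').measure_lt_top) hτ
    rw [hc B hB, hc C hC, mul_right_comm]
  simp only [measure_prod_eq_iSup_compactCovering τ A, ENNReal.iSup_mul, hslice]

lemma exists_isFiniteMeasureOnCompacts_eq_prod_of_map_prodMap_add_left
    (hτ : ∀ g : G, τ.map (Prod.map id (g + ·)) = τ) :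
    ∃ ϱ : Measure α, IsFiniteMeasureOnCompacts ϱ ∧ τ = ϱ.prod ν := by
  obtain ⟨K, hK, hK0⟩ := exists_compact_mem_nhds (0 : G)
  set U := interior K
  have hU0 : ν U ≠ 0 := isOpen_interior.measure_ne_zero ν ⟨0, mem_interior_iff_mem_nhds.2 hK0⟩
  have hUtop : ν U ≠ ∞ := ((measure_mono interior_subset).trans_lt hK.measure_lt_top).ne
  set ϱ : Measure α := (ν U)⁻¹ • (τ.restrict (Set.univ ×ˢ U)).map Prod.fst
  have hϱ : ∀ A, MeasurableSet A → ϱ A = (ν U)⁻¹ * τ (A ×ˢ U) := by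
    intro A hA
    rw [Measure.smul_apply, Measure.map_apply measurable_fst hA,
      Measure.restrict_apply (measurable_fst hA), smul_eq_mul]
    congr 2
    ext p
    simp
  have hϱK : IsFiniteMeasureOnCompacts ϱ := ⟨fun C hC => by
    rw [hϱ C hC.measurableSet]
    exact ENNReal.mul_lt_top (ENNReal.inv_lt_top.2 (pos_iff_ne_zero.2 hU0))
      ((measure_mono (Set.prod_mono le_rfl interior_subset)).trans_lt
        (hC.prod hK).measure_lt_top)⟩
  refine ⟨ϱ, hϱK, (Measure.prod_eq fun A B hA hB => ?_).symm⟩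
  rw [hϱ A hA, mul_assoc,
    ← measure_prod_mul_eq_of_map_prodMap_add_left hτ hA hB isOpen_interior.measurableSet,
    mul_left_comm, ENNReal.inv_mul_cancel hU0 hUtop, mul_one]

theorem exists_eq_prod_iff_map_prodMap_add_left :
    (∃ ϱ : Measure α, IsFiniteMeasureOnCompacts ϱ ∧ τ = ϱ.prod ν) ↔
      ∀ g : G, τ.map (Prod.map id (g + ·)) = τ := by
  refine ⟨?_, exists_isFiniteMeasureOnCompacts_eq_prod_of_map_prodMap_add_left⟩
  rintro ⟨ϱ, hϱ, rfl⟩ g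
  rw [← Measure.map_prod_map _ _ measurable_id (measurable_const_add g), Measure.map_id,
    map_add_left_eq_self]

end ProdHaar

def eqvCLE (n : ℕ) : ((Fin n → ℝ) × (Fin n → ℝ)) ≃L[ℝ] (Fin n → ℂ) :=
  LinearEquiv.toContinuousLinearEquiv
    { toFun := eqv
      invFun := fun z => (fun j => (z j).re, fun j => (z j).im)
      map_add' := fun _ _ => funext fun _ => Complex.ext rfl rfl
      map_smul' := fun _ _ => funext fun _ => Complex.ext (by simp [eqv]) (by simp [eqv])
      left_inv := fun _ => rfl
      right_inv := fun _ => rfl }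

@[simp] lemma coe_eqvCLE : ⇑(eqvCLE n) = eqv := rfl

lemma isHorizontal_iff_map_add_eq (μ : Measure (Fin n → ℂ)) [IsFiniteMeasureOnCompacts μ] :
    IsHorizontal μ ↔ ∀ y : Fin n → ℝ, μ.map (· + eqv (0, y)) = μ := by
  set e := (eqvCLE n).toHomeomorph
  set τ := μ.map e.symm
  have : IsFiniteMeasureOnCompacts τ := Measure.IsFiniteMeasureOnCompacts.map μ e.symm
  have hμ : μ = τ.map (eqvCLE n) := (MeasurableEquiv.map_map_symm e.toMeasurableEquiv).symm
  calc IsHorizontal μ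
      ↔ ∃ ϱ : Measure (Fin n → ℝ), IsFiniteMeasureOnCompacts ϱ ∧ τ = ϱ.prod volume := by
        refine exists_congr fun ϱ => and_congr
          ⟨fun _ => inferInstance, fun _ => inferInstance⟩ ?_
        rw [eq_comm, ← coe_eqvCLE]
        exact e.toMeasurableEquiv.map_apply_eq_iff_map_symm_apply_eq.trans eq_comm
    _ ↔ ∀ y, τ.map (Prod.map id (y + ·)) = τ := exists_eq_prod_iff_map_prodMap_add_left
    _ ↔ ∀ y : Fin n → ℝ, μ.map (· + eqv (0, y)) = μ := by
        refine forall_congr' fun y => ?_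
        have hy : Prod.map id (y + ·) = (· + ((0 : Fin n → ℝ), y)) := by
          funext p
          exact Prod.ext (add_zero _).symm (add_comm _ _)
        rw [hy, hμ, ← coe_eqvCLE, (eqvCLE n).map_map_add_right_eq_iff]

lemma setOf_re_eq_zero_eq_range_eqv :
    {z : Fin n → ℂ | ∀ j, (z j).re = 0} = Set.range fun y : Fin n → ℝ => eqv (0, y) := by
  ext z
  refine ⟨fun hz => ⟨fun j => (z j).im, funext fun j => Complex.ext (hz j).symm rfl⟩, ?_⟩
  rintro ⟨y, rfl⟩ j
  rfl

theorem stmt19_general (L : Submodule ℝ ((Fin n → ℝ) × (Fin n → ℝ)))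
    (X : Matrix (Fin n) (Fin n) ℂ) (hX : X ∈ Matrix.unitaryGroup (Fin n) ℂ)
    (hXL : (fun v => X.mulVec (eqv v)) '' (L : Set ((Fin n → ℝ) × (Fin n → ℝ)))
            = {z : Fin n → ℂ | ∀ j, (z j).re = 0})
    (μ μXs : Measure (Fin n → ℂ)) (hfin : IsFiniteMeasureOnCompacts μ)
    (hμXs : ∀ E : Set (Fin n → ℂ), MeasurableSet E → μXs E = μ (X.conjTranspose.mulVec '' E)) :
    (∀ E : Set (Fin n → ℂ), MeasurableSet E →
        ∀ h : (Fin n → ℝ) × (Fin n → ℝ), h ∈ L → μ ((fun z => z + eqv h) '' E) = μ E)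
      ↔ IsHorizontal μXs := by
  set U := (Matrix.UnitaryGroup.toLinearEquiv ⟨X, hX⟩).toContinuousLinearEquiv
  have hμXs' : μXs = μ.map U := by
    ext E hE
    rw [hμXs E hE, Measure.map_apply U.continuous.measurable hE, ← U.image_symm_eq_preimage]
    -- `U.symm` is multiplication by `X⁻¹ = star X = Xᴴ` in the unitary group
    rfl
  have : IsFiniteMeasureOnCompacts μXs :=
    hμXs' ▸ Measure.IsFiniteMeasureOnCompacts.map μ U.toHomeomorph
  have hinv : (∀ E : Set (Fin n → ℂ), MeasurableSet E → ∀ h ∈ L, μ ((· + eqv h) '' E) = μ E)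
      ↔ ∀ h ∈ L, μ.map (· + eqv h) = μ := by
    simp only [Measure.ext_iff]
    refine ⟨fun H h hL E hE => ?_, fun H E hE h hL => ?_⟩
    · rw [← H E hE (-h) (neg_mem hL), measure_image_add_right μ _ hE, ← coe_eqvCLE, map_neg,
        neg_neg]
    · rw [measure_image_add_right μ _ hE, ← coe_eqvCLE, ← map_neg]
      exact H _ (neg_mem hL) E hE
  rw [hinv, isHorizontal_iff_map_add_eq,
    ← Set.forall_mem_range (p := fun w => μXs.map (· + w) = μXs),
    ← setOf_re_eq_zero_eq_range_eqv, ← hXL, Set.forall_mem_image, hμXs']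
  exact forall₂_congr fun h _ => (U.map_map_add_right_eq_iff μ (eqv h)).symm

/-- for a Lagrangian plane 𝓛 and a unitary matrix X with X·𝓛 = iℝⁿ, a positive
regular Borel measure μ (finite on compacts) is 𝓛-invariant iff μ_{X*} is horizontal, where
μ_{X*}(E) = μ(X*·E). -/
theorem stmt19 (L : Submodule ℝ ((Fin n → ℝ) × (Fin n → ℝ)))
    (hdim : Module.finrank ℝ L = n)
    (hlag : ∀ v ∈ L, ∀ w ∈ L, sympForm v w = 0)
    (X : Matrix (Fin n) (Fin n) ℂ) (hX : X ∈ Matrix.unitaryGroup (Fin n) ℂ)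
    (hXL : (fun v => X.mulVec (eqv v)) '' (L : Set ((Fin n → ℝ) × (Fin n → ℝ)))
            = {z : Fin n → ℂ | ∀ j, (z j).re = 0})
    (μ μXs : Measure (Fin n → ℂ)) (hreg : μ.Regular) (hfin : IsFiniteMeasureOnCompacts μ)
    (hμXs : ∀ E : Set (Fin n → ℂ), MeasurableSet E → μXs E = μ (X.conjTranspose.mulVec '' E)) :
    (∀ E : Set (Fin n → ℂ), MeasurableSet E →
        ∀ h : (Fin n → ℝ) × (Fin n → ℝ), h ∈ L → μ ((fun z => z + eqv h) '' E) = μ E)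
      ↔ IsHorizontal μXs :=
  stmt19_general L X hX hXL μ μXs hfin hμXs

end
end
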